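/- arXiv:2102.03192 — 5 statements merged into one kernel-verified Lean document; each statement's English description precedes it below -/
import Mathlib

section
/- Let X be a finite type with |X| = m ≥ 1, let K ≥ 1, and let x₁, …, x_K be a sequence of elements of X. For each k ∈ {1, …, K} let n_k = |{ j : 1 ≤ j ≤ k, x_j = x_k }| (the number of occurrences of x_k among the first k terms, so n_k ≥ 1). Then ∑_{k=1}^{K} 1/√(n_k) ≤ 2 √(m K). -/
/-! Grouping the terms by the value of `x` turns the sum into `∑ i, ∑ t ∈ [1, Nᵢ], 1/√t`, where `Nᵢ`
is the number of occurrences of `i`: along the occurrences of `i`, the counts `n k` run through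
`1, …, Nᵢ`. Each inner sum is at most `2√Nᵢ`, and by Cauchy–Schwarz `∑ i, √Nᵢ ≤ √(m ∑ i, Nᵢ) = √(m K)`. -/

open Finset

lemma Real.sum_Icc_one_div_sqrt_le (N : ℕ) : ∑ t ∈ Icc 1 N, 1 / √(t : ℝ) ≤ 2 * √(N : ℝ) := by
  induction N with
  | zero => simp
  | succ N ih =>
    rw [sum_Icc_succ_top (by omega)]
    have hN : √(N : ℝ) ^ 2 = N := Real.sq_sqrt (by positivity)
    have hN1 : √((N + 1 : ℕ) : ℝ) ^ 2 = N + 1 := by rw [Real.sq_sqrt (by positivity)]; push_cast; ring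
    have hpos : 0 < √((N + 1 : ℕ) : ℝ) := Real.sqrt_pos.2 (by positivity)
    -- `2 (√(N+1) - √N) = 2 / (√(N+1) + √N) ≥ 1 / √(N+1)`
    have hstep : 1 / √((N + 1 : ℕ) : ℝ) ≤ 2 * √((N + 1 : ℕ) : ℝ) - 2 * √(N : ℝ) := by
      rw [div_le_iff₀ hpos]
      nlinarith [sq_nonneg (√((N + 1 : ℕ) : ℝ) - √(N : ℝ)), Real.sqrt_nonneg (N : ℝ)]
    linarith

lemma Real.sum_sqrt_le_sqrt_card_mul_sum {ι : Type*} (s : Finset ι) {f : ι → ℝ}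
    (hf : ∀ i, 0 ≤ f i) : ∑ i ∈ s, √(f i) ≤ √(#s * ∑ i ∈ s, f i) := by
  simpa [Real.sqrt_mul (Nat.cast_nonneg _)] using
    Real.sum_sqrt_mul_sqrt_le s (fun _ => zero_le_one) hf

section OccurrenceCounts

variable {ι : Type*} [LinearOrder ι]

lemma Finset.strictMonoOn_card_filter_le (s : Finset ι) :
    StrictMonoOn (fun k => #{j ∈ s | j ≤ k}) s := by
  intro k _ k' hk' hkk'
  refine card_lt_card ((ssubset_iff_of_subset ?_).2 ⟨k', ?_, ?_⟩)
  · exact monotone_filter_right _ fun j _ hj => hj.trans hkk'.le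
  · simpa using hk'
  · simp [hkk']

lemma Finset.sum_comp_card_filter_le {M : Type*} [AddCommMonoid M] (s : Finset ι) (g : ℕ → M) :
    ∑ k ∈ s, g #{j ∈ s | j ≤ k} = ∑ t ∈ Icc 1 #s, g t := by
  have hinj := (strictMonoOn_card_filter_le s).injOn
  have himage : s.image (fun k => #{j ∈ s | j ≤ k}) = Icc 1 #s := by
    refine eq_of_subset_of_card_le (fun t ht => ?_) (by simp [card_image_of_injOn hinj])
    obtain ⟨k, hk, rfl⟩ := mem_image.1 ht
    exact mem_Icc.2 ⟨card_pos.2 ⟨k, by simpa using hk⟩, card_filter_le _ _⟩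
  rw [← himage, sum_image hinj]

lemma Finset.sum_comp_card_occurrences {α M : Type*} [Fintype ι] [Fintype α] [DecidableEq α]
    [AddCommMonoid M] (x : ι → α) (g : ℕ → M) :
    ∑ k, g #{j | j ≤ k ∧ x j = x k} = ∑ i, ∑ t ∈ Icc 1 #{k | x k = i}, g t := by
  rw [← sum_fiberwise univ x]
  refine sum_congr rfl fun i _ => ?_
  rw [← sum_comp_card_filter_le]
  refine sum_congr rfl fun k hk => ?_
  rw [(mem_filter.1 hk).2]
  simp only [filter_filter, and_comm]

end OccurrenceCounts

theorem stmt_6_general {X : Type*} [Fintype X] [DecidableEq X] (m K : ℕ)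
    (hm : Fintype.card X = m)
    (x : Fin K → X)
    (n : Fin K → ℕ)
    (hn : ∀ k : Fin K, n k = (Finset.univ.filter fun j : Fin K => j ≤ k ∧ x j = x k).card) :
    ∑ k : Fin K, (1 : ℝ) / Real.sqrt (n k) ≤ 2 * Real.sqrt (m * K) := by
  have hfibers : ∑ i, (#{k | x k = i} : ℝ) = K := by
    simpa using sum_fiberwise univ x fun _ => (1 : ℝ)
  calc ∑ k, (1 : ℝ) / √(n k)
      = ∑ i, ∑ t ∈ Icc 1 #{k | x k = i}, 1 / √(t : ℝ) := by
        simp only [hn]; exact sum_comp_card_occurrences x fun t => 1 / √(t : ℝ)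
    _ ≤ ∑ i, 2 * √(#{k | x k = i} : ℝ) := sum_le_sum fun i _ => Real.sum_Icc_one_div_sqrt_le _
    _ = 2 * ∑ i, √(#{k | x k = i} : ℝ) := by rw [mul_sum]
    _ ≤ 2 * √(m * K) := by
        rw [← hm, ← hfibers, ← card_univ]
        gcongr
        exact Real.sum_sqrt_le_sqrt_card_mul_sum _ fun _ => Nat.cast_nonneg _

/-- Pigeonhole bound on the sum of inverse square roots of visitation counts:
for a sequence of `K` elements of a finite type of cardinality `m`, letting
`n k` be the number of occurrences of the `k`-th element among the first `k`
terms, we have `∑_{k=1}^{K} 1/√(n_k) ≤ 2√(m K)`. -/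
theorem stmt_6 {X : Type*} [Fintype X] [DecidableEq X] (m K : ℕ)
    (hm : Fintype.card X = m) (hm1 : 1 ≤ m) (hK : 1 ≤ K)
    (x : Fin K → X)
    (n : Fin K → ℕ)
    (hn : ∀ k : Fin K, n k = (Finset.univ.filter fun j : Fin K => j ≤ k ∧ x j = x k).card) :
    ∑ k : Fin K, (1 : ℝ) / Real.sqrt (n k) ≤ 2 * Real.sqrt (m * K) :=
  stmt_6_general m K hm x n hn
end

section
/- Let d, K ≥ 1, G > 0, and let B̄ denote the closed unit ball of the Euclidean space ℝ^d. Let f₁, …, f_K : ℝ^d → ℝ be convex functions, and let θ¹ ∈ B̄. Suppose for each k ∈ {1, …, K} there is a vector g^k ∈ ℝ^d with ‖g^k‖₂ ≤ G satisfying the subgradient inequality f_k(θ) ≥ f_k(θ^k) + ⟪g^k, θ − θ^k⟫ for all θ ∈ ℝ^d, and define θ^{k+1} = Π_{B̄}( θ^k − g^k/(G √k) ), where Π_{B̄} is the metric projection onto B̄. Then for every θ ∈ B̄: ∑_{k=1}^{K} ( f_k(θ^k) − f_k(θ) ) ≤ 3 G √K. -/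
/-!
Projection onto the ball is nonexpansive towards points of the ball, so the standard
descent step gives `⟪g^k, θ^k - ϑ⟫ ≤ (G√k/2) (‖θ^k - ϑ‖² - ‖θ^{k+1} - ϑ‖²) + G/(2√k)`.
Summing by parts with `‖θ^k - ϑ‖² ≤ 4` and increasing weights `√k` bounds the first part
by `2G√K`, and `∑ 1/√k ≤ 2√K` bounds the second by `G√K`.
-/

noncomputable def projBall {d : ℕ} (y : EuclideanSpace ℝ (Fin d)) :
    EuclideanSpace ℝ (Fin d) :=
  if ‖y‖ ≤ 1 then y else ‖y‖⁻¹ • y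

open Finset Real RealInnerProductSpace

lemma inner_le_of_norm_sub_le_norm_sub_smul {E : Type*} [NormedAddCommGroup E]
    [InnerProductSpace ℝ E] {x x' g u : E} {η : ℝ} (hη : 0 < η)
    (h : ‖x' - u‖ ≤ ‖x - η • g - u‖) :
    ⟪g, x - u⟫ ≤ (‖x - u‖ ^ 2 - ‖x' - u‖ ^ 2) / (2 * η) + η / 2 * ‖g‖ ^ 2 := by
  have hsq : ‖x' - u‖ ^ 2 ≤ ‖x - u‖ ^ 2 - 2 * η * ⟪g, x - u⟫ + η ^ 2 * ‖g‖ ^ 2 := by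
    calc ‖x' - u‖ ^ 2 ≤ ‖(x - u) - η • g‖ ^ 2 := by
          rw [sub_right_comm]; gcongr
      _ = _ := by
          rw [norm_sub_sq_real, real_inner_smul_right, real_inner_comm, norm_smul,
            norm_eq_abs, abs_of_pos hη]
          ring
  rw [div_add' _ _ _ (by positivity), le_div_iff₀ (by positivity)]
  nlinarith

lemma sum_Icc_mul_sub_succ_le {a b : ℕ → ℝ} {D : ℝ} (hb : Monotone b) (hb0 : b 0 = 0)
    (ha : ∀ k, 0 ≤ a k) : ∀ {n : ℕ}, (∀ k ∈ Icc 1 n, a k ≤ D) →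
    ∑ k ∈ Icc 1 n, b k * (a k - a (k + 1)) ≤ b n * D := by
  suffices ∀ n, (∀ k ∈ Icc 1 n, a k ≤ D) →
      ∑ k ∈ Icc 1 n, b k * (a k - a (k + 1)) ≤ b n * (D - a (n + 1)) by
    intro n haD
    have hbn : 0 ≤ b n := hb0 ▸ hb n.zero_le
    nlinarith [this n haD, ha (n + 1)]
  intro n
  induction n with
  | zero => simp [hb0]
  | succ n ih =>
    intro haD
    rw [sum_Icc_succ_top (by omega)]
    have hn : a (n + 1) ≤ D := haD (n + 1) (by simp)
    have := ih fun k hk => haD k (by simp at hk ⊢; omega)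
    nlinarith [hb n.le_succ, ha (n + 1)]

lemma sum_Icc_inv_sqrt_le (n : ℕ) : ∑ k ∈ Icc 1 n, (√k)⁻¹ ≤ 2 * √n := by
  induction n with
  | zero => simp
  | succ n ih =>
    rw [sum_Icc_succ_top (by omega)]
    have hpos : 0 < √(n + 1 : ℕ) := sqrt_pos.2 (by positivity)
    -- `1 / √(n+1) ≤ 2 (√(n+1) - √n)` since `√n ≤ √(n+1)` and `√(n+1)² - √n² = 1`
    have : (√(n + 1 : ℕ))⁻¹ ≤ 2 * √(n + 1 : ℕ) - 2 * √n := by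
      rw [inv_le_iff_one_le_mul₀' hpos]
      have h1 := sq_sqrt (Nat.cast_nonneg (α := ℝ) n)
      have h2 := sq_sqrt (Nat.cast_nonneg (α := ℝ) (n + 1))
      push_cast at h2 ⊢
      nlinarith [sq_nonneg (√(n + 1 : ℝ) - √n)]
    linarith

section Projection

variable {d : ℕ}

lemma norm_projBall_le_one (y : EuclideanSpace ℝ (Fin d)) : ‖projBall y‖ ≤ 1 := by
  unfold projBall
  split_ifs with h
  · exact h
  · rw [norm_smul, norm_inv, norm_norm, inv_mul_cancel₀ (by linarith [norm_nonneg y])]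

lemma norm_projBall_sub_le (y : EuclideanSpace ℝ (Fin d)) {u : EuclideanSpace ℝ (Fin d)}
    (hu : ‖u‖ ≤ 1) : ‖projBall y - u‖ ≤ ‖y - u‖ := by
  unfold projBall
  split_ifs with h
  · exact le_rfl
  rw [not_le] at h
  have hr : 0 < ‖y‖ := one_pos.trans h
  have hyu : ⟪y, u⟫ ≤ ‖y‖ :=
    (real_inner_le_norm y u).trans (mul_le_of_le_one_right hr.le hu)
  rw [← pow_le_pow_iff_left₀ (norm_nonneg _) (norm_nonneg _) two_ne_zero,
    norm_sub_sq_real, norm_sub_sq_real, real_inner_smul_left, norm_smul, norm_inv, norm_norm,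
    inv_mul_cancel₀ hr.ne']
  -- the difference of the two sides is `(‖y‖ - 1) (‖y‖ + 1 - 2⟪y, u⟫ / ‖y‖) ≥ 0`
  have : 0 ≤ (‖y‖ - 1) * (‖y‖ + 1 - 2 * ⟪y, u⟫ / ‖y‖) := by
    refine mul_nonneg (by linarith) ?_
    rw [sub_nonneg, div_le_iff₀ hr]
    nlinarith
  have hexp : (‖y‖ - 1) * (‖y‖ + 1 - 2 * ⟪y, u⟫ / ‖y‖)
      = ‖y‖ ^ 2 - 2 * ⟪y, u⟫ - (1 ^ 2 - 2 * (‖y‖⁻¹ * ⟪y, u⟫)) := by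
    field_simp; ring
  linarith


lemma sub_le_of_projBall_subgradient_step {F : EuclideanSpace ℝ (Fin d) → ℝ}
    {x g u : EuclideanSpace ℝ (Fin d)} {G s : ℝ} (hG : 0 < G) (hs : 0 < s)
    (hsub : ∀ v, F v ≥ F x + ⟪g, v - x⟫) (hg : ‖g‖ ≤ G) (hu : ‖u‖ ≤ 1) :
    F x - F u ≤ G / 2 * (s * (‖x - u‖ ^ 2 - ‖projBall (x - (G * s)⁻¹ • g) - u‖ ^ 2))
      + G / 2 * s⁻¹ := by
  have hlin : F x - F u ≤ ⟪g, x - u⟫ := by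
    have := hsub u
    rw [← neg_sub, inner_neg_right] at this
    linarith
  have hstep := inner_le_of_norm_sub_le_norm_sub_smul (x := x) (g := g)
    (inv_pos.2 (mul_pos hG hs)) (norm_projBall_sub_le _ hu)
  have hg2 : (G * s)⁻¹ / 2 * ‖g‖ ^ 2 ≤ (G * s)⁻¹ / 2 * G ^ 2 := by gcongr
  calc F x - F u ≤ ⟪g, x - u⟫ := hlin
    _ ≤ (‖x - u‖ ^ 2 - ‖projBall (x - (G * s)⁻¹ • g) - u‖ ^ 2) / (2 * (G * s)⁻¹)
        + (G * s)⁻¹ / 2 * G ^ 2 := by linarith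
    _ = _ := by field_simp

end Projection

theorem stmt_10_general (d K : ℕ) (G : ℝ) (hG : 0 < G)
    (f : ℕ → EuclideanSpace ℝ (Fin d) → ℝ)
    (θ : ℕ → EuclideanSpace ℝ (Fin d)) (hθ1 : ‖θ 1‖ ≤ 1)
    (g : ℕ → EuclideanSpace ℝ (Fin d))
    (hg : ∀ k ∈ Finset.Icc 1 K, ‖g k‖ ≤ G)
    (hsub : ∀ k ∈ Finset.Icc 1 K, ∀ ϑ : EuclideanSpace ℝ (Fin d),
      f k ϑ ≥ f k (θ k) + (inner ℝ (g k) (ϑ - θ k) : ℝ))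
    (hupd : ∀ k ∈ Finset.Icc 1 K,
      θ (k + 1) = projBall (θ k - (G * Real.sqrt k)⁻¹ • g k)) :
    ∀ ϑ : EuclideanSpace ℝ (Fin d), ‖ϑ‖ ≤ 1 →
      ∑ k ∈ Finset.Icc 1 K, (f k (θ k) - f k ϑ) ≤ 3 * G * Real.sqrt K := by
  intro ϑ hϑ
  have hball : ∀ k ∈ Icc 1 K, ‖θ k‖ ≤ 1 := by
    intro k hk
    obtain ⟨hk1, hkK⟩ := mem_Icc.1 hk
    rcases hk1.eq_or_lt with rfl | hk1
    · exact hθ1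
    · obtain ⟨j, rfl⟩ := Nat.exists_eq_add_one_of_ne_zero (by omega : k ≠ 0)
      rw [hupd j (mem_Icc.2 ⟨by omega, by omega⟩)]
      exact norm_projBall_le_one _
  have hdist : ∀ k ∈ Icc 1 K, ‖θ k - ϑ‖ ^ 2 ≤ 2 ^ 2 := fun k hk => by
    gcongr
    exact (norm_sub_le _ _).trans (by linarith [hball k hk])
  have hstep : ∀ k ∈ Icc 1 K, f k (θ k) - f k ϑ ≤
      G / 2 * (√k * (‖θ k - ϑ‖ ^ 2 - ‖θ (k + 1) - ϑ‖ ^ 2)) + G / 2 * (√k)⁻¹ := by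
    intro k hk
    rw [hupd k hk]
    exact sub_le_of_projBall_subgradient_step hG (sqrt_pos.2 (Nat.cast_pos.2 (mem_Icc.1 hk).1))
      (hsub k hk) (hg k hk) hϑ
  calc ∑ k ∈ Icc 1 K, (f k (θ k) - f k ϑ)
      ≤ G / 2 * (∑ k ∈ Icc 1 K, √k * (‖θ k - ϑ‖ ^ 2 - ‖θ (k + 1) - ϑ‖ ^ 2)
          + ∑ k ∈ Icc 1 K, (√k)⁻¹) := by
        rw [mul_add, mul_sum, mul_sum, ← sum_add_distrib]
        exact sum_le_sum hstep
    _ ≤ G / 2 * (√K * 2 ^ 2 + 2 * √K) := by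
        gcongr
        · exact sum_Icc_mul_sub_succ_le (b := fun k : ℕ => √(k : ℝ))
            (fun _ _ h => sqrt_le_sqrt (Nat.cast_le.2 h)) (by simp) (fun _ => by positivity) hdist
        · exact sum_Icc_inv_sqrt_le K
    _ = 3 * G * √K := by ring

/-- Regret bound for online projected subgradient descent on the closed unit
ball with step sizes `η_k = 1/(G√k)`: for convex losses `f_k` with subgradients
`g^k` of norm at most `G`, the regret against any comparator `θ` in the ball is
at most `3 G √K`. -/
theorem stmt_10 (d K : ℕ) (hd : 1 ≤ d) (hK : 1 ≤ K) (G : ℝ) (hG : 0 < G)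
    (f : ℕ → EuclideanSpace ℝ (Fin d) → ℝ)
    (hf : ∀ k ∈ Finset.Icc 1 K, ConvexOn ℝ Set.univ (f k))
    (θ : ℕ → EuclideanSpace ℝ (Fin d)) (hθ1 : ‖θ 1‖ ≤ 1)
    (g : ℕ → EuclideanSpace ℝ (Fin d))
    (hg : ∀ k ∈ Finset.Icc 1 K, ‖g k‖ ≤ G)
    (hsub : ∀ k ∈ Finset.Icc 1 K, ∀ ϑ : EuclideanSpace ℝ (Fin d),
      f k ϑ ≥ f k (θ k) + (inner ℝ (g k) (ϑ - θ k) : ℝ))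
    (hupd : ∀ k ∈ Finset.Icc 1 K,
      θ (k + 1) = projBall (θ k - (G * Real.sqrt k)⁻¹ • g k)) :
    ∀ ϑ : EuclideanSpace ℝ (Fin d), ‖ϑ‖ ≤ 1 →
      ∑ k ∈ Finset.Icc 1 K, (f k (θ k) - f k ϑ) ≤ 3 * G * Real.sqrt K :=
  stmt_10_general d K G hG f θ hθ1 g hg hsub hupd
end

section
/- Let S, A, B be finite nonempty types, let H ≥ 1, R ≥ 0, and let r_h : S × A × B → ℝ satisfy |r_h(s,a,b)| ≤ R for h ∈ {1, …, H}. Let P_h(·|s,a,b) and P̂_h(·|s,a,b) be probability vectors on S for each h, s, a, b, and let β_h : S × A × B → ℝ with β_h ≥ 0. Define the true values by V*_{H+1}(s) = 0, Q*_h(s,a,b) = r_h(s,a,b) + ∑_{s'} P_h(s'|s,a,b) V*_{h+1}(s'), V*_h(s) = min_{μ ∈ Δ(A)} max_{ν ∈ Δ(B)} ∑_{a,b} μ(a) ν(b) Q*_h(s,a,b); and define the pessimistic estimates by V_{H+1}(s) = 0, Q_h(s,a,b) = max{ r_h(s,a,b) + ∑_{s'} P̂_h(s'|s,a,b) V_{h+1}(s')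 − β_h(s,a,b), −RH }, V_h(s) = min_{μ ∈ Δ(A)} max_{ν ∈ Δ(B)} ∑_{a,b} μ(a) ν(b) Q_h(s,a,b). If for all h, s, a, b: | ∑_{s'} ( P̂_h(s'|s,a,b) − P_h(s'|s,a,b) ) V*_{h+1}(s') | ≤ β_h(s,a,b), then for all h, s, a, b: Q_h(s,a,b) ≤ Q*_h(s,a,b) and V_h(s) ≤ V*_h(s). -/
/-!
Backward induction on `h`. First, `V*_h ≥ -R (H + 1 - h)`, because each backup adds a reward
`≥ -R` to an average of values. Then, if `V_{h+1} ≤ V*_{h+1}`, the untruncated pessimistic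
backup satisfies `r + P̂ V_{h+1} - β ≤ r + P̂ V*_{h+1} - β ≤ r + P V*_{h+1} = Q*_h` by the bonus
condition, while the truncation level `-RH` lies below `Q*_h` by the first step; hence
`Q_h ≤ Q*_h`, and `V_h ≤ V*_h` since the value of a matrix game is monotone in its payoffs.
-/

open Finset

section MatrixGame

variable {A B : Type*} [Fintype A] [Fintype B]

lemma stdSimplex_nonempty [Nonempty A] : (stdSimplex ℝ A).Nonempty :=
  Set.nonempty_coe_sort.1 inferInstance

def expectedPayoff (μ : A → ℝ) (ν : B → ℝ) (f : A → B → ℝ) : ℝ :=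
  ∑ a, ∑ b, μ a * ν b * f a b

noncomputable def bestResponseValue (μ : A → ℝ) (f : A → B → ℝ) : ℝ :=
  sSup ((fun ν => expectedPayoff μ ν f) '' stdSimplex ℝ B)

noncomputable def matrixGameValue (f : A → B → ℝ) : ℝ :=
  sInf ((fun μ => bestResponseValue μ f) '' stdSimplex ℝ A)

variable {μ : A → ℝ} {ν : B → ℝ} {f g : A → B → ℝ}

lemma expectedPayoff_mono (hμ : μ ∈ stdSimplex ℝ A) (hν : ν ∈ stdSimplex ℝ B)
    (hfg : ∀ a b, f a b ≤ g a b) : expectedPayoff μ ν f ≤ expectedPayoff μ ν g :=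
  sum_le_sum fun a _ => sum_le_sum fun b _ =>
    mul_le_mul_of_nonneg_left (hfg a b) (mul_nonneg (hμ.1 a) (hν.1 b))

lemma expectedPayoff_const (hμ : μ ∈ stdSimplex ℝ A) (hν : ν ∈ stdSimplex ℝ B) (c : ℝ) :
    expectedPayoff μ ν (fun _ _ => c) = c := by
  simp only [expectedPayoff, ← sum_mul, ← mul_sum, hν.2, mul_one, hμ.2, one_mul]

lemma bddAbove_expectedPayoff_image (f : A → B → ℝ) (hμ : μ ∈ stdSimplex ℝ A) :
    BddAbove ((fun ν => expectedPayoff μ ν f) '' stdSimplex ℝ B) := by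
  obtain ⟨c, hc⟩ := (Set.finite_range fun p : A × B => f p.1 p.2).bddAbove
  refine ⟨c, ?_⟩
  rintro _ ⟨ν, hν, rfl⟩
  calc expectedPayoff μ ν f ≤ expectedPayoff μ ν (fun _ _ => c) :=
        expectedPayoff_mono hμ hν fun a b => hc ⟨(a, b), rfl⟩
    _ = c := expectedPayoff_const hμ hν c

variable [Nonempty B]

lemma le_bestResponseValue (hμ : μ ∈ stdSimplex ℝ A) {c : ℝ}
    (hf : ∀ a b, c ≤ f a b) : c ≤ bestResponseValue μ f := by
  obtain ⟨ν, hν⟩ := stdSimplex_nonempty (A := B)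
  calc c = expectedPayoff μ ν (fun _ _ => c) := (expectedPayoff_const hμ hν c).symm
    _ ≤ expectedPayoff μ ν f := expectedPayoff_mono hμ hν hf
    _ ≤ bestResponseValue μ f :=
        le_csSup (bddAbove_expectedPayoff_image f hμ) ⟨ν, hν, rfl⟩

lemma bestResponseValue_mono (hμ : μ ∈ stdSimplex ℝ A)
    (hfg : ∀ a b, f a b ≤ g a b) : bestResponseValue μ f ≤ bestResponseValue μ g := by
  refine csSup_le (stdSimplex_nonempty.image _) ?_
  rintro _ ⟨ν, hν, rfl⟩
  exact (expectedPayoff_mono hμ hν hfg).trans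
    (le_csSup (bddAbove_expectedPayoff_image g hμ) ⟨ν, hν, rfl⟩)

lemma bddBelow_bestResponseValue_image (f : A → B → ℝ) :
    BddBelow ((fun μ => bestResponseValue μ f) '' stdSimplex ℝ A) := by
  obtain ⟨c, hc⟩ := (Set.finite_range fun p : A × B => f p.1 p.2).bddBelow
  refine ⟨c, ?_⟩
  rintro _ ⟨μ, hμ, rfl⟩
  exact le_bestResponseValue hμ fun a b => hc ⟨(a, b), rfl⟩

variable [Nonempty A]

lemma le_matrixGameValue {c : ℝ} (hf : ∀ a b, c ≤ f a b) : c ≤ matrixGameValue f := by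
  refine le_csInf (stdSimplex_nonempty.image _) ?_
  rintro _ ⟨μ, hμ, rfl⟩
  exact le_bestResponseValue hμ hf

lemma matrixGameValue_mono (hfg : ∀ a b, f a b ≤ g a b) :
    matrixGameValue f ≤ matrixGameValue g := by
  refine le_csInf (stdSimplex_nonempty.image _) ?_
  rintro _ ⟨μ, hμ, rfl⟩
  exact (csInf_le (bddBelow_bestResponseValue_image f) ⟨μ, hμ, rfl⟩).trans
    (bestResponseValue_mono hμ hfg)

end MatrixGame

section Backup

variable {S : Type*} [Fintype S]

lemma le_sum_mul_of_mem_stdSimplex {p v : S → ℝ} {c : ℝ} (hp : p ∈ stdSimplex ℝ S)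
    (hv : ∀ s, c ≤ v s) : c ≤ ∑ s, p s * v s :=
  calc c = ∑ s, p s * c := by rw [← sum_mul, hp.2, one_mul]
    _ ≤ ∑ s, p s * v s := sum_le_sum fun s _ => mul_le_mul_of_nonneg_left (hv s) (hp.1 s)

lemma neg_add_le_reward_add_expectation {p v : S → ℝ} {r R c : ℝ} (hp : p ∈ stdSimplex ℝ S)
    (hr : |r| ≤ R) (hv : ∀ s, -c ≤ v s) : -(R + c) ≤ r + ∑ s, p s * v s := by
  have := le_sum_mul_of_mem_stdSimplex hp hv
  linarith [neg_le_of_abs_le hr]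

lemma pessimisticBackup_le {p phat v vstar : S → ℝ} {r β M : ℝ} (hphat : ∀ s, 0 ≤ phat s)
    (hv : ∀ s, v s ≤ vstar s) (hβ : |∑ s, (phat s - p s) * vstar s| ≤ β)
    (hM : -M ≤ r + ∑ s, p s * vstar s) :
    max (r + ∑ s, phat s * v s - β) (-M) ≤ r + ∑ s, p s * vstar s := by
  refine max_le ?_ hM
  have hmono : ∑ s, phat s * v s ≤ ∑ s, phat s * vstar s :=
    sum_le_sum fun s _ => mul_le_mul_of_nonneg_left (hv s) (hphat s)
  have herr := (abs_le.mp hβ).2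
  simp only [sub_mul, sum_sub_distrib] at herr
  linarith

end Backup

theorem Nat.backward_induction {H : ℕ} {p : ℕ → Prop} (hend : p (H + 1))
    (hstep : ∀ h ∈ Icc 1 H, p (h + 1) → p h) : ∀ h ∈ Icc 1 (H + 1), p h := by
  intro h hh
  rw [mem_Icc] at hh
  exact Nat.decreasingInduction'
    (fun k hk hhk => hstep k (mem_Icc.2 ⟨hh.1.trans hhk, Nat.lt_succ_iff.1 hk⟩)) hh.2 hend

theorem stmt_13_general {S A B : Type*} [Fintype S] [Fintype A] [Fintype B]
    [Nonempty A] [Nonempty B]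
    (H : ℕ) (R : ℝ) (hR : 0 ≤ R)
    (r : ℕ → S → A → B → ℝ)
    (hr : ∀ h ∈ Finset.Icc 1 H, ∀ s a b, |r h s a b| ≤ R)
    (P Phat : ℕ → S → A → B → S → ℝ)
    (hP0 : ∀ h ∈ Finset.Icc 1 H, ∀ s a b s', 0 ≤ P h s a b s')
    (hP1 : ∀ h ∈ Finset.Icc 1 H, ∀ s a b, ∑ s' : S, P h s a b s' = 1)
    (hPhat0 : ∀ h ∈ Finset.Icc 1 H, ∀ s a b s', 0 ≤ Phat h s a b s')
    (β : ℕ → S → A → B → ℝ)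
    (Qstar : ℕ → S → A → B → ℝ) (Vstar : ℕ → S → ℝ)
    (hVstarEnd : ∀ s, Vstar (H + 1) s = 0)
    (hQstar : ∀ h ∈ Finset.Icc 1 H, ∀ s a b,
      Qstar h s a b = r h s a b + ∑ s' : S, P h s a b s' * Vstar (h + 1) s')
    (hVstar : ∀ h ∈ Finset.Icc 1 H, ∀ s,
      Vstar h s = sInf ((fun μ : A → ℝ =>
          sSup ((fun ν : B → ℝ => ∑ a : A, ∑ b : B, μ a * ν b * Qstar h s a b) ''
            stdSimplex ℝ B)) '' stdSimplex ℝ A))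
    (Q : ℕ → S → A → B → ℝ) (V : ℕ → S → ℝ)
    (hVEnd : ∀ s, V (H + 1) s = 0)
    (hQ : ∀ h ∈ Finset.Icc 1 H, ∀ s a b,
      Q h s a b = max (r h s a b + (∑ s' : S, Phat h s a b s' * V (h + 1) s')
        - β h s a b) (-(R * H)))
    (hV : ∀ h ∈ Finset.Icc 1 H, ∀ s,
      V h s = sInf ((fun μ : A → ℝ =>
          sSup ((fun ν : B → ℝ => ∑ a : A, ∑ b : B, μ a * ν b * Q h s a b) ''
            stdSimplex ℝ B)) '' stdSimplex ℝ A))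
    (hconc : ∀ h ∈ Finset.Icc 1 H, ∀ s a b,
      |∑ s' : S, (Phat h s a b s' - P h s a b s') * Vstar (h + 1) s'| ≤ β h s a b) :
    ∀ h ∈ Finset.Icc 1 H, ∀ s a b,
      Q h s a b ≤ Qstar h s a b ∧ V h s ≤ Vstar h s := by
  have hIcc : ∀ h ∈ Icc 1 H, h ∈ Icc 1 (H + 1) ∧ h + 1 ∈ Icc 1 (H + 1) := by
    intro h hh
    simp only [mem_Icc] at hh ⊢
    omega
  have hQstar_ge (h) (hh : h ∈ Icc 1 H) (s a b)
      (hVs : ∀ s', -(R * (H + 1 - (h + 1 : ℕ))) ≤ Vstar (h + 1) s') :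
      -(R * (H + 1 - h)) ≤ Qstar h s a b := by
    rw [hQstar h hh]
    convert neg_add_le_reward_add_expectation ⟨hP0 h hh s a b, hP1 h hh s a b⟩
      (hr h hh s a b) hVs using 2
    push_cast
    ring
  have hVstar_ge : ∀ h ∈ Icc 1 (H + 1), ∀ s, -(R * (H + 1 - h)) ≤ Vstar h s := by
    refine Nat.backward_induction (fun s => by simp [hVstarEnd]) fun h hh ih s => ?_
    rw [hVstar h hh]
    exact le_matrixGameValue fun a b => hQstar_ge h hh s a b ih
  have hQ_le (h) (hh : h ∈ Icc 1 H) (hVs : ∀ s', V (h + 1) s' ≤ Vstar (h + 1) s') (s a b) :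
      Q h s a b ≤ Qstar h s a b := by
    have hRH : -(R * H) ≤ Qstar h s a b := by
      have h1 : (1 : ℝ) ≤ h := by exact_mod_cast (mem_Icc.1 hh).1
      refine le_trans ?_ (hQstar_ge h hh s a b (hVstar_ge (h + 1) (hIcc h hh).2))
      nlinarith
    rw [hQ h hh]
    rw [hQstar h hh] at hRH ⊢
    exact pessimisticBackup_le (hPhat0 h hh s a b) hVs (hconc h hh s a b) hRH
  have hV_le : ∀ h ∈ Icc 1 (H + 1), ∀ s, V h s ≤ Vstar h s := by
    refine Nat.backward_induction (fun s => by simp [hVEnd, hVstarEnd]) fun h hh ih s => ?_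
    rw [hV h hh, hVstar h hh]
    exact matrixGameValue_mono (hQ_le h hh ih s)
  exact fun h hh s a b =>
    ⟨hQ_le h hh (hV_le (h + 1) (hIcc h hh).2) s a b, hV_le h (hIcc h hh).1 s⟩

/-- Deterministic backward-induction core of the optimism (lower confidence
bound) lemma for value iteration with exploration bonuses in a finite-horizon
two-player zero-sum Markov game (first player minimizing): if the bonus `β`
dominates the transition estimation error on the true value `V*`, then the
pessimistic estimates `Q, V` are lower bounds of `Q*, V*`. -/
theorem stmt_13 {S A B : Type*} [Fintype S] [Fintype A] [Fintype B]
    [Nonempty S] [Nonempty A] [Nonempty B]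
    (H : ℕ) (hH : 1 ≤ H) (R : ℝ) (hR : 0 ≤ R)
    (r : ℕ → S → A → B → ℝ)
    (hr : ∀ h ∈ Finset.Icc 1 H, ∀ s a b, |r h s a b| ≤ R)
    (P Phat : ℕ → S → A → B → S → ℝ)
    (hP0 : ∀ h ∈ Finset.Icc 1 H, ∀ s a b s', 0 ≤ P h s a b s')
    (hP1 : ∀ h ∈ Finset.Icc 1 H, ∀ s a b, ∑ s' : S, P h s a b s' = 1)
    (hPhat0 : ∀ h ∈ Finset.Icc 1 H, ∀ s a b s', 0 ≤ Phat h s a b s')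
    (hPhat1 : ∀ h ∈ Finset.Icc 1 H, ∀ s a b, ∑ s' : S, Phat h s a b s' = 1)
    (β : ℕ → S → A → B → ℝ) (hβ : ∀ h s a b, 0 ≤ β h s a b)
    (Qstar : ℕ → S → A → B → ℝ) (Vstar : ℕ → S → ℝ)
    (hVstarEnd : ∀ s, Vstar (H + 1) s = 0)
    (hQstar : ∀ h ∈ Finset.Icc 1 H, ∀ s a b,
      Qstar h s a b = r h s a b + ∑ s' : S, P h s a b s' * Vstar (h + 1) s')
    (hVstar : ∀ h ∈ Finset.Icc 1 H, ∀ s,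
      Vstar h s = sInf ((fun μ : A → ℝ =>
          sSup ((fun ν : B → ℝ => ∑ a : A, ∑ b : B, μ a * ν b * Qstar h s a b) ''
            stdSimplex ℝ B)) '' stdSimplex ℝ A))
    (Q : ℕ → S → A → B → ℝ) (V : ℕ → S → ℝ)
    (hVEnd : ∀ s, V (H + 1) s = 0)
    (hQ : ∀ h ∈ Finset.Icc 1 H, ∀ s a b,
      Q h s a b = max (r h s a b + (∑ s' : S, Phat h s a b s' * V (h + 1) s')
        - β h s a b) (-(R * H)))
    (hV : ∀ h ∈ Finset.Icc 1 H, ∀ s,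
      V h s = sInf ((fun μ : A → ℝ =>
          sSup ((fun ν : B → ℝ => ∑ a : A, ∑ b : B, μ a * ν b * Q h s a b) ''
            stdSimplex ℝ B)) '' stdSimplex ℝ A))
    (hconc : ∀ h ∈ Finset.Icc 1 H, ∀ s a b,
      |∑ s' : S, (Phat h s a b s' - P h s a b s') * Vstar (h + 1) s'| ≤ β h s a b) :
    ∀ h ∈ Finset.Icc 1 H, ∀ s a b,
      Q h s a b ≤ Qstar h s a b ∧ V h s ≤ Vstar h s :=
  stmt_13_general H R hR r hr P Phat hP0 hP1 hPhat0 β Qstar Vstar hVstarEnd hQstar hVstar Q V hVEnd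
    hQ hV hconc
end

section
/- Let a ∈ ℝ^d with ‖a‖₂ = 1, let b ∈ ℝ, let W be a nonempty subset of the halfspace { y ∈ ℝ^d : ⟪a, y⟫ ≤ b }, let p ∈ ℝ^d satisfy ⟪a, p⟫ = b, and let γ ∈ (0, 1]. Suppose x ∈ ℝ^d satisfies ⟪a, x − p⟫ ≥ γ ‖x − p‖₂. Then dist(x, W) ≥ γ ‖x − p‖₂. Consequently, for every 1-Lipschitz function g : ℝ^d → ℝ and every w* ∈ ℝ^d with g(w*) ≤ g(p), one has g(x) − g(w*) ≥ − dist(x, W)/γ. -/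
/-!
For `w ∈ W` the halfspace condition gives `⟪a, x - w⟫ ≥ ⟪a, x - p⟫ ≥ γ ‖x - p‖`, and Cauchy–Schwarz
bounds `⟪a, x - w⟫` by `‖x - w‖`; so `dist(x, W) ≥ γ ‖x - p‖`. For the second claim,
`g x - g w* ≥ g x - g p ≥ -‖x - p‖ ≥ -dist(x, W) / γ`.
-/

open Metric

theorem inner_sub_le_infDist_of_subset_halfspace {E : Type*} [NormedAddCommGroup E]
    [InnerProductSpace ℝ E] {a p x : E} {b : ℝ} {W : Set E} (ha : ‖a‖ ≤ 1) (hne : W.Nonempty)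
    (hW : W ⊆ {y | inner ℝ a y ≤ b}) (hp : b ≤ inner ℝ a p) :
    inner ℝ a (x - p) ≤ infDist x W := by
  refine (le_infDist hne).2 fun w hw => ?_
  have hwb : inner ℝ a w ≤ b := hW hw
  calc inner ℝ a (x - p) ≤ inner ℝ a (x - w) := by
        rw [inner_sub_right, inner_sub_right]; linarith
    _ ≤ ‖a‖ * ‖x - w‖ := real_inner_le_norm a (x - w)
    _ ≤ dist x w := by rw [dist_eq_norm]; exact mul_le_of_le_one_left (norm_nonneg _) ha

/-- Key geometric step (nonsingular-intersection case) for lower-bounding cost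
suboptimality by constraint violation: if `W` lies in the halfspace
`⟪a, ·⟫ ≤ b`, the point `p` lies on its boundary, and `x` makes an angle at
most `arccos γ` with the outward normal `a` as seen from `p`, then
`dist(x, W) ≥ γ ‖x − p‖`, and hence for any 1-Lipschitz `g` and any `w*` with
`g(w*) ≤ g(p)`, `g(x) − g(w*) ≥ −dist(x, W)/γ`. -/
theorem stmt_14 {d : ℕ} (a : EuclideanSpace ℝ (Fin d)) (ha : ‖a‖ = 1) (b : ℝ)
    (W : Set (EuclideanSpace ℝ (Fin d))) (hne : W.Nonempty)
    (hW : W ⊆ {y | (inner ℝ a y : ℝ) ≤ b})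
    (p : EuclideanSpace ℝ (Fin d)) (hp : (inner ℝ a p : ℝ) = b)
    (γ : ℝ) (hγ : γ ∈ Set.Ioc (0 : ℝ) 1)
    (x : EuclideanSpace ℝ (Fin d)) (hx : (inner ℝ a (x - p) : ℝ) ≥ γ * ‖x - p‖) :
    Metric.infDist x W ≥ γ * ‖x - p‖ ∧
    ∀ g : EuclideanSpace ℝ (Fin d) → ℝ, LipschitzWith 1 g →
      ∀ wstar : EuclideanSpace ℝ (Fin d), g wstar ≤ g p →
        g x - g wstar ≥ -(Metric.infDist x W / γ) := by
  have hdist : γ * ‖x - p‖ ≤ infDist x W :=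
    hx.trans (inner_sub_le_infDist_of_subset_halfspace ha.le hne hW hp.ge)
  refine ⟨hdist, fun g hg wstar hwstar => ?_⟩
  have hgp : g p ≤ g x + ‖x - p‖ := by
    simpa only [NNReal.coe_one, one_mul, dist_eq_norm'] using hg.le_add_mul p x
  have hnorm : ‖x - p‖ ≤ infDist x W / γ := (le_div_iff₀ hγ.1).2 (by linarith)
  linarith
end

section
/- Let W be a nonempty closed convex subset of the Euclidean space ℝ^d and let K ≥ 1. Let v̂¹, …, v̂^K ∈ ℝ^d, define the running averages W⁰ = 0 and W^k = ((k−1) W^{k−1} + v̂^k)/k for k ≥ 1, and for each k let p^{k−1} ∈ W attain ‖W^{k−1} − p^{k−1}‖₂ = dist(W^{k−1}, W), with θ^k = (W^{k−1} − p^{k−1})/‖W^{k−1} − p^{k−1}‖₂ when W^{k−1} ∉ W and θ^k an arbitrary unit vector otherwise. Then K² · dist(W^K, W)² ≤ ∑_{k=1}^{K} ‖v̂^k − p^{k−1}‖₂² + 2 ∑_{k=1}^{K} (k−1) · dist(W^{k−1}, W) · ⟪θ^k, v̂^k − p^{k−1}⟫. -/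
/-!
Put `D k = dist(W^k, W)`. Since `k W^k − k p^{k−1} = (k−1)(W^{k−1} − p^{k−1}) + (v̂^k − p^{k−1})` and
`p^{k−1} ∈ W`, expanding the square gives
`k² D_k² ≤ (k−1)² D_{k−1}² + ‖v̂^k − p^{k−1}‖² + 2 (k−1) ⟪W^{k−1} − p^{k−1}, v̂^k − p^{k−1}⟫`,
and the cross term equals `(k−1) D_{k−1} ⟪θ^k, v̂^k − p^{k−1}⟫` because `W^{k−1} − p^{k−1}` is
`D_{k−1} θ^k` (both vanish when `W^{k−1} ∈ W`). Summing over `k` telescopes `k² D_k²`.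
-/

open Metric Finset

theorem Finset.sum_Icc_one_sub_pred (g : ℕ → ℝ) (K : ℕ) :
    ∑ k ∈ Icc 1 K, (g k - g (k - 1)) = g K - g 0 := by
  induction K with
  | zero => simp
  | succ n ih =>
    rw [sum_Icc_succ_top (by omega), ih]
    simp

section InnerProductSpace

variable {E : Type*} [NormedAddCommGroup E] [InnerProductSpace ℝ E]

theorem real_inner_eq_norm_mul_inner_normalize (a b : E) :
    inner ℝ a b = ‖a‖ * inner ℝ (‖a‖⁻¹ • a) b := by
  rcases eq_or_ne a 0 with rfl | ha
  · simp
  · rw [real_inner_smul_left, mul_inv_cancel_left₀ (norm_ne_zero_iff.mpr ha)]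

theorem real_inner_sub_eq_infDist_mul_inner {W : Set E} {x p θ : E}
    (hp : ‖x - p‖ = infDist x W) (hθ : x ∉ W → θ = ‖x - p‖⁻¹ • (x - p)) (b : E) :
    inner ℝ (x - p) b = infDist x W * inner ℝ θ b := by
  by_cases hx : x ∈ W
  · have hxp : x - p = 0 := by rw [← norm_eq_zero, hp, infDist_zero_of_mem hx]
    rw [hxp, infDist_zero_of_mem hx, inner_zero_left, zero_mul]
  · rw [hθ hx, ← hp, real_inner_eq_norm_mul_inner_normalize]

theorem sq_mul_infDist_sq_le_of_smul_eq {W : Set E} {x x' v p : E} {k : ℝ}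
    (hx' : k • x' = (k - 1) • x + v) (hp : p ∈ W) :
    k ^ 2 * infDist x' W ^ 2
      ≤ (k - 1) ^ 2 * ‖x - p‖ ^ 2 + ‖v - p‖ ^ 2 + 2 * ((k - 1) * inner ℝ (x - p) (v - p)) := by
  have hsplit : k • (x' - p) = (k - 1) • (x - p) + (v - p) := by
    rw [smul_sub, hx']
    module
  have hdist : infDist x' W ≤ ‖x' - p‖ := by
    simpa only [dist_eq_norm] using infDist_le_dist_of_mem hp
  calc k ^ 2 * infDist x' W ^ 2 ≤ k ^ 2 * ‖x' - p‖ ^ 2 := by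
        gcongr
        exact infDist_nonneg
    _ = ‖(k - 1) • (x - p) + (v - p)‖ ^ 2 := by
        rw [← hsplit, norm_smul, mul_pow, Real.norm_eq_abs, sq_abs]
    _ = _ := by
        rw [norm_add_sq_real, norm_smul, mul_pow, Real.norm_eq_abs, sq_abs, real_inner_smul_left]
        ring

end InnerProductSpace

theorem stmt_17_general {d : ℕ} (W : Set (EuclideanSpace ℝ (Fin d)))
    (K : ℕ)
    (v : ℕ → EuclideanSpace ℝ (Fin d))
    (Wavg : ℕ → EuclideanSpace ℝ (Fin d))
    (hWavg : ∀ k ∈ Finset.Icc 1 K,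
      Wavg k = (k : ℝ)⁻¹ • (((k : ℝ) - 1) • Wavg (k - 1) + v k))
    (p : ℕ → EuclideanSpace ℝ (Fin d))
    (hpW : ∀ k ∈ Finset.Icc 1 K, p (k - 1) ∈ W)
    (hproj : ∀ k ∈ Finset.Icc 1 K,
      ‖Wavg (k - 1) - p (k - 1)‖ = Metric.infDist (Wavg (k - 1)) W)
    (θ : ℕ → EuclideanSpace ℝ (Fin d))
    (hθ : ∀ k ∈ Finset.Icc 1 K,
      (Wavg (k - 1) ∉ W →
        θ k = ‖Wavg (k - 1) - p (k - 1)‖⁻¹ • (Wavg (k - 1) - p (k - 1))) ∧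
      (Wavg (k - 1) ∈ W → ‖θ k‖ = 1)) :
    (K : ℝ) ^ 2 * Metric.infDist (Wavg K) W ^ 2
      ≤ ∑ k ∈ Finset.Icc 1 K, ‖v k - p (k - 1)‖ ^ 2
        + 2 * ∑ k ∈ Finset.Icc 1 K, ((k : ℝ) - 1)
            * Metric.infDist (Wavg (k - 1)) W
            * (inner ℝ (θ k) (v k - p (k - 1)) : ℝ) := by
  set g : ℕ → ℝ := fun k => (k : ℝ) ^ 2 * infDist (Wavg k) W ^ 2
  have hstep : ∀ k ∈ Icc 1 K, g k - g (k - 1) ≤ ‖v k - p (k - 1)‖ ^ 2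
      + 2 * (((k : ℝ) - 1) * infDist (Wavg (k - 1)) W * inner ℝ (θ k) (v k - p (k - 1))) := by
    intro k hk
    have hk0 : (k : ℝ) ≠ 0 := by have := (mem_Icc.mp hk).1; positivity
    have hcast : ((k - 1 : ℕ) : ℝ) = (k : ℝ) - 1 := by
      rw [Nat.cast_sub (mem_Icc.mp hk).1, Nat.cast_one]
    have hsmul : (k : ℝ) • Wavg k = ((k : ℝ) - 1) • Wavg (k - 1) + v k := by
      rw [hWavg k hk, smul_inv_smul₀ hk0]
    have hrec := sq_mul_infDist_sq_le_of_smul_eq hsmul (hpW k hk)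
    rw [hproj k hk, real_inner_sub_eq_infDist_mul_inner (hproj k hk) (hθ k hk).1] at hrec
    simp only [g, hcast]
    linarith
  have hsum := sum_le_sum hstep
  rw [sum_Icc_one_sub_pred, sum_add_distrib, ← mul_sum] at hsum
  simpa [g] using hsum

/-- Telescoped Blackwell recursion for the projection-based dual update (PDU):
with running averages `W^k = ((k−1) W^{k−1} + v̂^k)/k`, projections `p^{k−1}`
of `W^{k−1}` onto the closed convex set `W`, and dual directions `θ^k` (the
normalized direction toward the projection when `W^{k−1} ∉ W`, an arbitrary
unit vector otherwise),
`K² dist(W^K, W)² ≤ ∑_k ‖v̂^k − p^{k−1}‖² + 2 ∑_k (k−1) dist(W^{k−1}, W) ⟪θ^k, v̂^k − p^{k−1}⟫`. -/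
theorem stmt_17 {d : ℕ} (W : Set (EuclideanSpace ℝ (Fin d)))
    (hne : W.Nonempty) (hcl : IsClosed W) (hconv : Convex ℝ W)
    (K : ℕ) (hK : 1 ≤ K)
    (v : ℕ → EuclideanSpace ℝ (Fin d))
    (Wavg : ℕ → EuclideanSpace ℝ (Fin d))
    (hW0 : Wavg 0 = 0)
    (hWavg : ∀ k ∈ Finset.Icc 1 K,
      Wavg k = (k : ℝ)⁻¹ • (((k : ℝ) - 1) • Wavg (k - 1) + v k))
    (p : ℕ → EuclideanSpace ℝ (Fin d))
    (hpW : ∀ k ∈ Finset.Icc 1 K, p (k - 1) ∈ W)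
    (hproj : ∀ k ∈ Finset.Icc 1 K,
      ‖Wavg (k - 1) - p (k - 1)‖ = Metric.infDist (Wavg (k - 1)) W)
    (θ : ℕ → EuclideanSpace ℝ (Fin d))
    (hθ : ∀ k ∈ Finset.Icc 1 K,
      (Wavg (k - 1) ∉ W →
        θ k = ‖Wavg (k - 1) - p (k - 1)‖⁻¹ • (Wavg (k - 1) - p (k - 1))) ∧
      (Wavg (k - 1) ∈ W → ‖θ k‖ = 1)) :
    (K : ℝ) ^ 2 * Metric.infDist (Wavg K) W ^ 2
      ≤ ∑ k ∈ Finset.Icc 1 K, ‖v k - p (k - 1)‖ ^ 2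
        + 2 * ∑ k ∈ Finset.Icc 1 K, ((k : ℝ) - 1)
            * Metric.infDist (Wavg (k - 1)) W
            * (inner ℝ (θ k) (v k - p (k - 1)) : ℝ) :=
  stmt_17_general W K v Wavg hWavg p hpW hproj θ hθ
end
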